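/- arXiv:2105.05833 — 2 statements merged into one kernel-verified Lean document; each statement's English description precedes it below -/
import Mathlib

section
/- Let Q be a generalised quadrangle with point-line incidence graph Γ, and let C be a neighbour-transitive code in Γ with |C| ≥ 2 and minimum distance δ equal to 3 or 4. If Aut(C) fixes a point p of Q, then every element of C is a point of Q at graph distance 4 from p in Γ, i.e. C ⊆ Γ₄(p). -/
/-- A finite generalised quadrangle of order `(s,t)`: each point is on `t+1` lines,
each line has `s+1` points, two distinct points lie on at most one common line,
two distinct lines meet in at most one common point, and for each non-incident
point-line pair `(p, ℓ)` there is a unique pair `(q, M)` with `p I M`, `q I M`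
and `q I ℓ`. -/
structure GenQuad (P L : Type*) (s t : ℕ) where
  I : P → L → Prop
  point_deg : ∀ p : P, Nat.card {ℓ : L // I p ℓ} = t + 1
  line_deg : ∀ ℓ : L, Nat.card {p : P // I p ℓ} = s + 1
  points_one_line : ∀ p₁ p₂ : P, p₁ ≠ p₂ → ∀ ℓ₁ ℓ₂ : L,
    I p₁ ℓ₁ → I p₂ ℓ₁ → I p₁ ℓ₂ → I p₂ ℓ₂ → ℓ₁ = ℓ₂
  lines_one_point : ∀ ℓ₁ ℓ₂ : L, ℓ₁ ≠ ℓ₂ → ∀ p₁ p₂ : P,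
    I p₁ ℓ₁ → I p₁ ℓ₂ → I p₂ ℓ₁ → I p₂ ℓ₂ → p₁ = p₂
  gq_axiom : ∀ (p : P) (ℓ : L), ¬ I p ℓ →
    ∃! qM : P × L, I p qM.2 ∧ I qM.1 qM.2 ∧ I qM.1 ℓ

/-- The point-line incidence graph of a generalised quadrangle. -/
def incGraph {P L : Type*} {s t : ℕ} (Q : GenQuad P L s t) : SimpleGraph (P ⊕ L) where
  Adj x y :=
    (∃ p ℓ, x = Sum.inl p ∧ y = Sum.inr ℓ ∧ Q.I p ℓ) ∨
    (∃ p ℓ, x = Sum.inr ℓ ∧ y = Sum.inl p ∧ Q.I p ℓ)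
  symm := by
    refine ⟨?_⟩
    rintro x y (⟨p, ℓ, rfl, rfl, h⟩ | ⟨p, ℓ, rfl, rfl, h⟩)
    · exact Or.inr ⟨p, ℓ, rfl, rfl, h⟩
    · exact Or.inl ⟨p, ℓ, rfl, rfl, h⟩
  loopless := by
    refine ⟨?_⟩
    rintro x (⟨p, ℓ, rfl, h, -⟩ | ⟨p, ℓ, rfl, h, -⟩) <;> exact absurd h (by simp)

/-- The minimum distance of a code `C` in a graph `Γ`. -/
noncomputable def minDist {V : Type*} (Γ : SimpleGraph V) (C : Set V) : ℕ :=
  sInf {d | ∃ x ∈ C, ∃ y ∈ C, x ≠ y ∧ Γ.dist x y = d}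

/-- The distance from a vertex `γ` to a code `C`. -/
noncomputable def distToCode {V : Type*} (Γ : SimpleGraph V) (C : Set V) (γ : V) : ℕ :=
  sInf {d | ∃ x ∈ C, Γ.dist γ x = d}

/-- The covering radius of a code `C` in a graph `Γ`. -/
noncomputable def covRad {V : Type*} (Γ : SimpleGraph V) (C : Set V) : ℕ :=
  sSup {d | ∃ γ : V, distToCode Γ C γ = d}

/-- `nbhd Γ C i` is the set `C_i` of vertices at distance exactly `i` from `C`. -/
def nbhd {V : Type*} (Γ : SimpleGraph V) (C : Set V) (i : ℕ) : Set V :=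
  {γ | distToCode Γ C γ = i}

/-- `g` is an automorphism of the graph `Γ`. -/
def IsGraphAut {V : Type*} (Γ : SimpleGraph V) (g : V ≃ V) : Prop :=
  ∀ x y : V, Γ.Adj (g x) (g y) ↔ Γ.Adj x y

/-- `Aut(C)` (automorphisms of `Γ` preserving `C` setwise) acts transitively on `S`. -/
def TransOn {V : Type*} (Γ : SimpleGraph V) (C S : Set V) : Prop :=
  ∀ x ∈ S, ∀ y ∈ S, ∃ g : V ≃ V, IsGraphAut Γ g ∧ (∀ v, g v ∈ C ↔ v ∈ C) ∧ g x = y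

/-- `C` is neighbour-transitive: `Aut(C)` is transitive on `C` and on `C₁`. -/
def NeighbourTransitive {V : Type*} (Γ : SimpleGraph V) (C : Set V) : Prop :=
  TransOn Γ C C ∧ TransOn Γ C (nbhd Γ C 1)

open SimpleGraph Sum

section Aux

variable {P L : Type*} {s t : ℕ} (Q : GenQuad P L s t)

lemma incGraph_adj_inl_inr {p : P} {ℓ : L} :
    (incGraph Q).Adj (inl p) (inr ℓ) ↔ Q.I p ℓ := by
  constructor
  · rintro (⟨a, b, h1, h2, h3⟩ | ⟨a, b, h1, h2, h3⟩) <;> simp_all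
  · intro h; exact Or.inl ⟨p, ℓ, rfl, rfl, h⟩

lemma incGraph_adj_inr_inl {p : P} {ℓ : L} :
    (incGraph Q).Adj (inr ℓ) (inl p) ↔ Q.I p ℓ := by
  constructor
  · rintro (⟨a, b, h1, h2, h3⟩ | ⟨a, b, h1, h2, h3⟩) <;> simp_all
  · intro h; exact Or.inr ⟨p, ℓ, rfl, rfl, h⟩

lemma incGraph_not_adj_inl_inl {p q : P} : ¬ (incGraph Q).Adj (inl p) (inl q) := by
  rintro (⟨a, b, h1, h2, h3⟩ | ⟨a, b, h1, h2, h3⟩) <;> simp_all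

lemma incGraph_not_adj_inr_inr {ℓ m : L} : ¬ (incGraph Q).Adj (inr ℓ) (inr m) := by
  rintro (⟨a, b, h1, h2, h3⟩ | ⟨a, b, h1, h2, h3⟩) <;> simp_all

lemma incGraph_adj_isLeft {x y : P ⊕ L} (h : (incGraph Q).Adj x y) :
    x.isLeft ≠ y.isLeft := by
  rcases h with ⟨a, b, rfl, rfl, h3⟩ | ⟨a, b, rfl, rfl, h3⟩ <;> simp

lemma incGraph_walk_parity :
    ∀ {x y : P ⊕ L} (w : (incGraph Q).Walk x y), (x.isLeft = y.isLeft ↔ Even w.length)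
  | x, _, .nil => by simp
  | x, y, .cons (v := b) h w => by
      have h1 := incGraph_adj_isLeft Q h
      have h2 := incGraph_walk_parity w
      rw [SimpleGraph.Walk.length_cons, Nat.even_add_one, ← h2]
      cases hx : x.isLeft <;> cases hb : b.isLeft <;> cases hy : y.isLeft <;> simp_all

variable [Finite P] [Finite L]

lemma exists_line_through (q : P) : ∃ ℓ : L, Q.I q ℓ := by
  have h : 0 < Nat.card {ℓ : L // Q.I q ℓ} := by rw [Q.point_deg]; omega
  obtain ⟨⟨ℓ, hℓ⟩⟩ := (Nat.card_pos_iff.mp h).1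
  exact ⟨ℓ, hℓ⟩

lemma exists_point_on (ℓ : L) : ∃ q : P, Q.I q ℓ := by
  have h : 0 < Nat.card {q : P // Q.I q ℓ} := by rw [Q.line_deg]; omega
  obtain ⟨⟨q, hq⟩⟩ := (Nat.card_pos_iff.mp h).1
  exact ⟨q, hq⟩

lemma walk_to_line (p : P) (ℓ : L) :
    ∃ w : (incGraph Q).Walk (inl p) (inr ℓ), w.length ≤ 3 := by
  by_cases h : Q.I p ℓ
  · exact ⟨.cons ((incGraph_adj_inl_inr Q).mpr h) .nil, by simp⟩
  · obtain ⟨⟨q, M⟩, ⟨h1, h2, h3⟩, -⟩ := Q.gq_axiom p ℓ h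
    exact ⟨.cons ((incGraph_adj_inl_inr Q).mpr h1)
      (.cons ((incGraph_adj_inr_inl Q).mpr h2)
        (.cons ((incGraph_adj_inl_inr Q).mpr h3) .nil)), by simp⟩

lemma walk_to_point (p q : P) :
    ∃ w : (incGraph Q).Walk (inl p) (inl q), w.length ≤ 4 := by
  obtain ⟨ℓ, hℓ⟩ := exists_line_through Q q
  obtain ⟨w, hw⟩ := walk_to_line Q p ℓ
  refine ⟨w.concat ((incGraph_adj_inr_inl Q).mpr hℓ), ?_⟩
  rw [SimpleGraph.Walk.length_concat]; omega

lemma dist_from_point_le (p : P) (x : P ⊕ L) : (incGraph Q).dist (inl p) x ≤ 4 := by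
  rcases x with q | ℓ
  · obtain ⟨w, hw⟩ := walk_to_point Q p q
    exact (SimpleGraph.dist_le w).trans hw
  · obtain ⟨w, hw⟩ := walk_to_line Q p ℓ
    exact (SimpleGraph.dist_le w).trans (by omega)

lemma reach_from_point (p : P) (x : P ⊕ L) : (incGraph Q).Reachable (inl p) x := by
  rcases x with q | ℓ
  · obtain ⟨w, -⟩ := walk_to_point Q p q; exact ⟨w⟩
  · obtain ⟨w, -⟩ := walk_to_line Q p ℓ; exact ⟨w⟩

lemma incGraph_preconnected : (incGraph Q).Preconnected := by
  intro x y
  rcases x with q | ℓ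
  · exact reach_from_point Q q y
  · obtain ⟨q, hq⟩ := exists_point_on Q ℓ
    exact (((incGraph_adj_inr_inl Q).mpr hq).reachable).trans (reach_from_point Q q y)

lemma incGraph_dist_parity {x y : P ⊕ L} (h : (incGraph Q).Reachable x y) :
    (x.isLeft = y.isLeft ↔ Even ((incGraph Q).dist x y)) := by
  obtain ⟨w, hw⟩ := h.exists_walk_length_eq_dist
  rw [← hw]
  exact incGraph_walk_parity Q w

end Aux

lemma aut_dist {V : Type*} {G : SimpleGraph V} (hc : G.Preconnected)
    (g : V ≃ V) (hg : IsGraphAut G g) (x y : V) :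
    G.dist (g x) (g y) = G.dist x y := by
  have key : ∀ (g : V ≃ V), IsGraphAut G g → ∀ x y : V,
      G.dist (g x) (g y) ≤ G.dist x y := by
    intro g hg x y
    obtain ⟨w, hw⟩ := (hc x y).exists_walk_length_eq_dist
    have hle := SimpleGraph.dist_le
      (w.map (⟨g, fun h => (hg _ _).mpr h⟩ : G →g G))
    rwa [SimpleGraph.Walk.length_map, hw] at hle
  refine le_antisymm (key g hg x y) ?_
  have hsymm : IsGraphAut G g.symm := by
    intro a b
    rw [← hg (g.symm a) (g.symm b)]
    simp
  have h2 := key g.symm hsymm (g x) (g y)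
  simpa using h2

lemma exists_mid {V : Type*} {G : SimpleGraph V} {x y : V} (h : G.dist x y = 2) :
    ∃ m, G.Adj x m ∧ G.Adj m y := by
  obtain ⟨w, hw⟩ := SimpleGraph.exists_walk_of_dist_ne_zero (G := G) (u := x) (v := y) (by omega)
  rw [h] at hw
  cases w with
  | nil => simp at hw
  | cons h1 w1 =>
    cases w1 with
    | nil => simp at hw
    | cons h2 w2 =>
      have hl : w2.length = 0 := by
        simp only [SimpleGraph.Walk.length_cons] at hw; omega
      have he := SimpleGraph.Walk.eq_of_length_eq_zero hl
      subst he
      exact ⟨_, h1, h2⟩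

lemma sInf_eq_one' {S : Set ℕ} (h1 : 1 ∈ S) (h0 : 0 ∉ S) : sInf S = 1 := by
  have hm := Nat.sInf_mem (⟨1, h1⟩ : S.Nonempty)
  have hle := Nat.sInf_le h1
  have : sInf S = 0 ∨ sInf S = 1 := by omega
  rcases this with h | h
  · rw [h] at hm; exact absurd hm h0
  · exact h


/-- If a non-trivial neighbour-transitive code with minimum distance `3`
or `4` admits only automorphisms fixing the point `p`, then every codeword is a vertex at
graph distance `4` from `p`. -/
theorem stmt5 {P L : Type*} [Finite P] [Finite L] {s t : ℕ}
    (Q : GenQuad P L s t) (hs : 1 ≤ s) (ht : 1 ≤ t)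
    (C : Set (P ⊕ L)) (hC2 : 2 ≤ C.ncard)
    (hδ : minDist (incGraph Q) C = 3 ∨ minDist (incGraph Q) C = 4)
    (hnt : NeighbourTransitive (incGraph Q) C)
    (p : P)
    (hfix : ∀ g : (P ⊕ L) ≃ (P ⊕ L), IsGraphAut (incGraph Q) g →
      (∀ v, g v ∈ C ↔ v ∈ C) → g (Sum.inl p) = Sum.inl p) :
    ∀ x ∈ C, (incGraph Q).dist (Sum.inl p) x = 4 := by
  classical
  have hreach : ∀ x y : P ⊕ L, (incGraph Q).Reachable x y := incGraph_preconnected Q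
  have hle4 : ∀ x, (incGraph Q).dist (inl p) x ≤ 4 := dist_from_point_le Q p
  -- all codewords are at the same distance from p
  have hsame : ∀ x ∈ C, ∀ y ∈ C,
      (incGraph Q).dist (inl p) x = (incGraph Q).dist (inl p) y := by
    intro x hx y hy
    obtain ⟨g, hgaut, hgC, hgxy⟩ := hnt.1 x hx y hy
    have hgp := hfix g hgaut hgC
    have hd := aut_dist (incGraph_preconnected Q) g hgaut (inl p) x
    rw [hgp, hgxy] at hd
    exact hd.symm
  obtain ⟨x₀, hx₀, y₀, hy₀, hxy₀⟩ :=
    (Set.one_lt_ncard (Set.toFinite C)).mp hC2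
  set k := (incGraph Q).dist (inl p) x₀ with hk_def
  suffices hk : k = 4 by
    intro x hx
    exact (hsame x hx x₀ hx₀).trans hk
  have hk_le : k ≤ 4 := hle4 x₀
  -- helper: distToCode = 1 for a vertex adjacent to a codeword that isn't a codeword
  have hC1 : ∀ v : P ⊕ L, v ∉ C → (∃ c ∈ C, (incGraph Q).Adj v c) →
      v ∈ nbhd (incGraph Q) C 1 := by
    intro v hvC ⟨c, hc, hadj⟩
    show distToCode (incGraph Q) C v = 1
    refine sInf_eq_one' ⟨c, hc, SimpleGraph.dist_eq_one_iff_adj.mpr hadj⟩ ?_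
    rintro ⟨c', hc', hd0⟩
    rcases (SimpleGraph.dist_eq_zero_iff_eq_or_not_reachable).mp hd0 with h | h
    · exact hvC (h ▸ hc')
    · exact h (hreach v c')
  by_contra hk4
  have hcase : k = 0 ∨ k = 1 ∨ k = 2 ∨ k = 3 := by omega
  rcases hcase with hk0 | hk1 | hk2 | hk3
  · -- k = 0 : x₀ = inl p, and then y₀ = inl p too, contradiction
    have hx0p : inl p = x₀ := by
      rcases (SimpleGraph.dist_eq_zero_iff_eq_or_not_reachable).mp hk0 with h | h
      · exact h
      · exact absurd (hreach _ _) h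
    have hy0 : (incGraph Q).dist (inl p) y₀ = 0 := (hsame y₀ hy₀ x₀ hx₀).trans hk0
    have hy0p : inl p = y₀ := by
      rcases (SimpleGraph.dist_eq_zero_iff_eq_or_not_reachable).mp hy0 with h | h
      · exact h
      · exact absurd (hreach _ _) h
    exact hxy₀ (hx0p ▸ hy0p ▸ rfl)
  · -- k = 1 : two codewords are lines through p, at mutual distance 2, contradicting δ ≥ 3
    have hlift : ∀ z ∈ C, ∃ ℓ : L, z = inr ℓ ∧ Q.I p ℓ := by
      intro z hz
      have hdz : (incGraph Q).dist (inl p) z = 1 := (hsame z hz x₀ hx₀).trans hk1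
      have hadj := SimpleGraph.dist_eq_one_iff_adj.mp hdz
      rcases z with q | ℓ
      · exact absurd hadj (incGraph_not_adj_inl_inl Q)
      · exact ⟨ℓ, rfl, (incGraph_adj_inl_inr Q).mp hadj⟩
    obtain ⟨ℓ₁, rfl, hpℓ₁⟩ := hlift x₀ hx₀
    obtain ⟨ℓ₂, rfl, hpℓ₂⟩ := hlift y₀ hy₀
    have hd2 : (incGraph Q).dist (inr ℓ₁) (inr ℓ₂) = 2 := by
      have hle : (incGraph Q).dist (inr ℓ₁) (inr ℓ₂) ≤ 2 := by
        have := SimpleGraph.dist_le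
          (SimpleGraph.Walk.cons ((incGraph_adj_inr_inl Q).mpr hpℓ₁)
            (SimpleGraph.Walk.cons ((incGraph_adj_inl_inr Q).mpr hpℓ₂)
              SimpleGraph.Walk.nil))
        simpa using this
      have hne0 : (incGraph Q).dist (inr ℓ₁) (inr ℓ₂) ≠ 0 :=
        SimpleGraph.dist_ne_zero_iff_ne_and_reachable.mpr ⟨hxy₀, hreach _ _⟩
      have hne1 : (incGraph Q).dist (inr ℓ₁) (inr ℓ₂) ≠ 1 := by
        intro h
        exact (incGraph_not_adj_inr_inr Q) (SimpleGraph.dist_eq_one_iff_adj.mp h)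
      omega
    have hmin : minDist (incGraph Q) C ≤ 2 :=
      Nat.sInf_le ⟨inr ℓ₁, hx₀, inr ℓ₂, hy₀, hxy₀, hd2⟩
    omega
  · -- k = 2 : codewords are points collinear with p
    have hx0even : (inl p : P ⊕ L).isLeft = x₀.isLeft := by
      rw [incGraph_dist_parity Q (hreach _ _), ← hk_def, hk2]
      decide
    obtain ⟨x, rfl⟩ : ∃ x : P, x₀ = inl x := by
      rcases x₀ with q | ℓ
      · exact ⟨q, rfl⟩
      · simp at hx0even
    obtain ⟨m, hm1, hm2⟩ := exists_mid (hk_def.symm.trans hk2)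
    obtain ⟨ℓ, rfl⟩ : ∃ ℓ : L, m = inr ℓ := by
      rcases m with q | ℓ
      · exact absurd hm1 (incGraph_not_adj_inl_inl Q)
      · exact ⟨ℓ, rfl⟩
    have hpℓ : Q.I p ℓ := (incGraph_adj_inl_inr Q).mp hm1
    have hxℓ : Q.I x ℓ := (incGraph_adj_inr_inl Q).mp hm2
    have hpx : p ≠ x := by
      rintro rfl
      have : (incGraph Q).dist (inl p) (inl p) = 0 := by simp
      omega
    -- a second line through x
    have hnt2 : Nontrivial {ℓ' : L // Q.I x ℓ'} := by
      rw [← Finite.one_lt_card_iff_nontrivial, Q.point_deg]; omega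
    obtain ⟨⟨ℓ', hxℓ'⟩, hne⟩ := exists_ne (⟨ℓ, hxℓ⟩ : {ℓ' : L // Q.I x ℓ'})
    have hℓne : ℓ' ≠ ℓ := fun h => hne (Subtype.ext h)
    have hpℓ' : ¬ Q.I p ℓ' := fun h =>
      hℓne (Q.points_one_line p x hpx ℓ' ℓ h hxℓ' hpℓ hxℓ)
    have hdℓ : (incGraph Q).dist (inl p) (inr ℓ) = 1 :=
      SimpleGraph.dist_eq_one_iff_adj.mpr hm1
    have hdℓ' : (incGraph Q).dist (inl p) (inr ℓ') = 3 := by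
      have hodd : ¬ Even ((incGraph Q).dist (inl p) (inr ℓ')) := by
        rw [← incGraph_dist_parity Q (hreach _ _)]; simp
      have hmod := Nat.not_even_iff.mp hodd
      have hne1 : (incGraph Q).dist (inl p) (inr ℓ') ≠ 1 := by
        intro h
        exact hpℓ' ((incGraph_adj_inl_inr Q).mp (SimpleGraph.dist_eq_one_iff_adj.mp h))
      have := hle4 (inr ℓ')
      omega
    -- both lines are in C₁
    have hdistC : ∀ c ∈ C, (incGraph Q).dist (inl p) c = 2 :=
      fun c hc => (hsame c hc (inl x) hx₀).trans hk2
    have hℓC : (inr ℓ : P ⊕ L) ∉ C := fun h => by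
      have := hdistC _ h; omega
    have hℓ'C : (inr ℓ' : P ⊕ L) ∉ C := fun h => by
      have := hdistC _ h; omega
    have h1 : (inr ℓ : P ⊕ L) ∈ nbhd (incGraph Q) C 1 :=
      hC1 _ hℓC ⟨inl x, hx₀, (incGraph_adj_inr_inl Q).mpr hxℓ⟩
    have h2 : (inr ℓ' : P ⊕ L) ∈ nbhd (incGraph Q) C 1 :=
      hC1 _ hℓ'C ⟨inl x, hx₀, (incGraph_adj_inr_inl Q).mpr hxℓ'⟩
    obtain ⟨g, hgaut, hgC, hgℓ⟩ := hnt.2 _ h1 _ h2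
    have hgp := hfix g hgaut hgC
    have hd := aut_dist (incGraph_preconnected Q) g hgaut (inl p) (inr ℓ)
    rw [hgp, hgℓ] at hd
    omega
  · -- k = 3 : codewords are lines not through p
    have hx0odd : (inl p : P ⊕ L).isLeft ≠ x₀.isLeft := by
      rw [ne_eq, incGraph_dist_parity Q (hreach _ _), ← hk_def, hk3]
      decide
    obtain ⟨ℓ, rfl⟩ : ∃ ℓ : L, x₀ = inr ℓ := by
      rcases x₀ with q | ℓ
      · simp at hx0odd
      · exact ⟨ℓ, rfl⟩
    have hdℓ : (incGraph Q).dist (inl p) (inr ℓ) = 3 := hk_def.symm.trans hk3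
    have hpℓ : ¬ Q.I p ℓ := by
      intro h
      have : (incGraph Q).dist (inl p) (inr ℓ) = 1 :=
        SimpleGraph.dist_eq_one_iff_adj.mpr ((incGraph_adj_inl_inr Q).mpr h)
      omega
    obtain ⟨⟨q, M⟩, ⟨hpM, hqM, hqℓ⟩, huniq⟩ := Q.gq_axiom p ℓ hpℓ
    have hqp : q ≠ p := by rintro rfl; exact hpℓ hqℓ
    have hdq : (incGraph Q).dist (inl p) (inl q) = 2 := by
      have hle : (incGraph Q).dist (inl p) (inl q) ≤ 2 := by
        have := SimpleGraph.dist_le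
          (SimpleGraph.Walk.cons ((incGraph_adj_inl_inr Q).mpr hpM)
            (SimpleGraph.Walk.cons ((incGraph_adj_inr_inl Q).mpr hqM)
              SimpleGraph.Walk.nil))
        simpa using this
      have hne0 : (incGraph Q).dist (inl p) (inl q) ≠ 0 :=
        SimpleGraph.dist_ne_zero_iff_ne_and_reachable.mpr
          ⟨by simp [hqp.symm], hreach _ _⟩
      have hne1 : (incGraph Q).dist (inl p) (inl q) ≠ 1 := fun h =>
        (incGraph_not_adj_inl_inl Q) (SimpleGraph.dist_eq_one_iff_adj.mp h)
      omega
    -- a second point on ℓ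
    have hnt2 : Nontrivial {r : P // Q.I r ℓ} := by
      rw [← Finite.one_lt_card_iff_nontrivial, Q.line_deg]; omega
    obtain ⟨⟨r, hrℓ⟩, hne⟩ := exists_ne (⟨q, hqℓ⟩ : {r : P // Q.I r ℓ})
    have hrq : r ≠ q := fun h => hne (Subtype.ext h)
    have hrp : r ≠ p := by rintro rfl; exact hpℓ hrℓ
    have hdr : (incGraph Q).dist (inl p) (inl r) = 4 := by
      have heven : Even ((incGraph Q).dist (inl p) (inl r)) := by
        rw [← incGraph_dist_parity Q (hreach _ _)]
        rfl
      have hne0 : (incGraph Q).dist (inl p) (inl r) ≠ 0 :=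
        SimpleGraph.dist_ne_zero_iff_ne_and_reachable.mpr
          ⟨by simp [hrp.symm, Ne.symm hrp], hreach _ _⟩
      have hne2 : (incGraph Q).dist (inl p) (inl r) ≠ 2 := by
        intro h
        obtain ⟨m, hm1, hm2⟩ := exists_mid h
        obtain ⟨N, rfl⟩ : ∃ N : L, m = inr N := by
          rcases m with a | N
          · exact absurd hm1 (incGraph_not_adj_inl_inl Q)
          · exact ⟨N, rfl⟩
        have hpN : Q.I p N := (incGraph_adj_inl_inr Q).mp hm1
        have hrN : Q.I r N := (incGraph_adj_inr_inl Q).mp hm2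
        have := huniq (r, N) ⟨hpN, hrN, hrℓ⟩
        exact hrq (congrArg Prod.fst this)
      have hmod := Nat.even_iff.mp heven
      have := hle4 (inl r)
      omega
    have hdistC : ∀ c ∈ C, (incGraph Q).dist (inl p) c = 3 :=
      fun c hc => (hsame c hc (inr ℓ) hx₀).trans hk3
    have hqC : (inl q : P ⊕ L) ∉ C := fun h => by
      have := hdistC _ h; omega
    have hrC : (inl r : P ⊕ L) ∉ C := fun h => by
      have := hdistC _ h; omega
    have h1 : (inl q : P ⊕ L) ∈ nbhd (incGraph Q) C 1 :=
      hC1 _ hqC ⟨inr ℓ, hx₀, (incGraph_adj_inl_inr Q).mpr hqℓ⟩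
    have h2 : (inl r : P ⊕ L) ∈ nbhd (incGraph Q) C 1 :=
      hC1 _ hrC ⟨inr ℓ, hx₀, (incGraph_adj_inl_inr Q).mpr hrℓ⟩
    obtain ⟨g, hgaut, hgC, hgq⟩ := hnt.2 _ h1 _ h2
    have hgp := hfix g hgaut hgC
    have hd := aut_dist (incGraph_preconnected Q) g hgaut (inl p) (inl q)
    rw [hgp, hgq] at hd
    omega
end

section
/- Let V = 𝔽₃⁴ carry the alternating bilinear form f(x,y) = x₁y₂ − x₂y₁ + x₃y₄ − x₄y₃, and let C be the set of five 2-dimensional subspaces of V given as the row spaces of the matrices [[1,0,1,0],[1,1,2,2]], [[1,0,0,1],[1,1,1,2]], [[1,0,2,1],[1,1,0,1]], [[1,0,1,2],[1,1,1,1]], [[1,0,2,2],[1,1,2,0]]. Then each element of C is a totally isotropic 2-dimensional subspace (a line of W₃(3)), the five subspaces pairwise intersect trivially, and C, regarded as a code in the point-line incidence graph of W₃(3), has minimum distance 4 and covering radius 3; that is, C is a maximal partial spread of W₃(3) of size 5. -/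
/-- The standard nondegenerate alternating bilinear form on `𝔽_q⁴`:
`f(x,y) = x₁y₂ − x₂y₁ + x₃y₄ − x₄y₃`. -/
def sform {F : Type*} [Field F] (x y : Fin 4 → F) : F :=
  x 0 * y 1 - x 1 * y 0 + x 2 * y 3 - x 3 * y 2

/-- A line of `W₃(q)`: a totally isotropic `2`-dimensional subspace of `𝔽_q⁴`. -/
def IsIsoLine (F : Type*) [Field F] (W : Submodule F (Fin 4 → F)) : Prop :=
  Module.finrank F W = 2 ∧ ∀ x ∈ W, ∀ y ∈ W, sform x y = 0

/-- The points of `W₃(q)`: the `1`-dimensional subspaces of `𝔽_q⁴`. -/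
def Pt (F : Type*) [Field F] := {W : Submodule F (Fin 4 → F) // Module.finrank F W = 1}

/-- The lines of `W₃(q)`: the totally isotropic `2`-dimensional subspaces of `𝔽_q⁴`. -/
def Ln (F : Type*) [Field F] := {W : Submodule F (Fin 4 → F) // IsIsoLine F W}

/-- The point-line incidence graph of the generalised quadrangle `W₃(q)`. -/
def W3 (F : Type*) [Field F] : SimpleGraph (Pt F ⊕ Ln F) where
  Adj x y :=
    (∃ p ℓ, x = Sum.inl p ∧ y = Sum.inr ℓ ∧ p.1 ≤ ℓ.1) ∨
    (∃ p ℓ, x = Sum.inr ℓ ∧ y = Sum.inl p ∧ p.1 ≤ ℓ.1)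
  symm := by
    constructor
    rintro x y (⟨p, ℓ, rfl, rfl, h⟩ | ⟨p, ℓ, rfl, rfl, h⟩)
    · exact Or.inr ⟨p, ℓ, rfl, rfl, h⟩
    · exact Or.inl ⟨p, ℓ, rfl, rfl, h⟩
  loopless := by
    constructor
    rintro x (⟨p, ℓ, rfl, h, -⟩ | ⟨p, ℓ, rfl, h, -⟩) <;> exact absurd h (by simp)

/-- The five explicit `2`-dimensional subspaces of `𝔽₃⁴`, given as row spaces. -/
def exLines : Set (Submodule (ZMod 3) (Fin 4 → ZMod 3)) :=
  {Submodule.span (ZMod 3) {![1,0,1,0], ![1,1,2,2]},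
   Submodule.span (ZMod 3) {![1,0,0,1], ![1,1,1,2]},
   Submodule.span (ZMod 3) {![1,0,2,1], ![1,1,0,1]},
   Submodule.span (ZMod 3) {![1,0,1,2], ![1,1,1,1]},
   Submodule.span (ZMod 3) {![1,0,2,2], ![1,1,2,0]}}

section Aux

open Submodule Module SimpleGraph

abbrev F3 := ZMod 3
abbrev V4 := Fin 4 → F3

/-! ### Bilinear algebra of `sform` -/

lemma sform_add_right {F : Type*} [Field F] (x y z : Fin 4 → F) :
    sform x (y + z) = sform x y + sform x z := by
  simp only [sform, Pi.add_apply]; ring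

lemma sform_smul_right {F : Type*} [Field F] (c : F) (x y : Fin 4 → F) :
    sform x (c • y) = c * sform x y := by
  simp only [sform, Pi.smul_apply, smul_eq_mul]; ring

lemma sform_expand {F : Type*} [Field F] (a b c d : F) (x y : Fin 4 → F) :
    sform (a • x + b • y) (c • x + d • y) = (a * d - b * c) * sform x y := by
  simp only [sform, Pi.add_apply, Pi.smul_apply, smul_eq_mul]; ring

/-- In any 2-dimensional subspace there is a nonzero vector perpendicular to `z`. -/
lemma exists_perp {F : Type*} [Field F] (z : Fin 4 → F) (L : Submodule F (Fin 4 → F))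
    (hL : Module.finrank F L = 2) : ∃ w ∈ L, w ≠ 0 ∧ sform z w = 0 := by
  have : FiniteDimensional F L := by
    refine FiniteDimensional.of_finrank_pos ?_
    rw [hL]; norm_num
  let φ : L →ₗ[F] F :=
    { toFun := fun w => sform z (w : Fin 4 → F)
      map_add' := fun a b => by simpa using sform_add_right z a b
      map_smul' := fun c a => by simpa using sform_smul_right c z a }
  have h1 : Module.finrank F (LinearMap.range φ) ≤ 1 := by
    simpa using (LinearMap.range φ).finrank_le
  have h2 := LinearMap.finrank_range_add_finrank_ker φ
  rw [hL] at h2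
  have h3 : LinearMap.ker φ ≠ ⊥ := by
    intro h
    rw [h, finrank_bot] at h2
    omega
  obtain ⟨w, hwk, hw0⟩ := Submodule.ne_bot_iff _ |>.mp h3
  refine ⟨(w : Fin 4 → F), w.2, ?_, hwk⟩
  simpa [Submodule.coe_eq_zero] using hw0

lemma indep_of_not_mem {F : Type*} [Field F] {z w : Fin 4 → F} (hw : w ≠ 0)
    (hzw : z ∉ Submodule.span F {w}) : LinearIndependent F ![z, w] := by
  refine LinearIndependent.pair_iff.mpr fun s t hst => ?_
  have hs : s = 0 := by
    by_contra hs
    apply hzw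
    rw [Submodule.mem_span_singleton]
    have h1 : s • z = -(t • w) := eq_neg_of_add_eq_zero_left hst
    refine ⟨-(s⁻¹ * t), ?_⟩
    calc (-(s⁻¹ * t)) • w = s⁻¹ • (-(t • w)) := by
          rw [smul_neg, neg_smul, smul_smul]
      _ = s⁻¹ • (s • z) := by rw [h1]
      _ = z := by rw [smul_smul, inv_mul_cancel₀ hs, one_smul]
  refine ⟨hs, ?_⟩
  rw [hs, zero_smul, zero_add] at hst
  exact (smul_eq_zero.mp hst).resolve_right hw

lemma finrank_span_pair {F : Type*} [Field F] {z w : Fin 4 → F}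
    (h : LinearIndependent F ![z, w]) :
    Module.finrank F (Submodule.span F {z, w}) = 2 := by
  have hr : Set.range ![z, w] = {z, w} := by
    simp [Matrix.range_cons, Matrix.range_empty, Set.union_empty, Set.pair_comm]
  have := finrank_span_eq_card h
  rw [hr] at this
  simpa using this

lemma line_of_perp {F : Type*} [Field F] {z w : Fin 4 → F} (hz : z ≠ 0) (hw : w ≠ 0)
    (hzw : z ∉ Submodule.span F {w}) (hp : sform z w = 0) :
    IsIsoLine F (Submodule.span F {z, w}) := by
  refine ⟨finrank_span_pair (indep_of_not_mem hw hzw), ?_⟩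
  intro x hx y hy
  obtain ⟨a, b, rfl⟩ := Submodule.mem_span_pair.mp hx
  obtain ⟨c, d, rfl⟩ := Submodule.mem_span_pair.mp hy
  rw [sform_expand, hp, mul_zero]

/-! ### Graph lemmas -/

lemma adj_pl {F : Type*} [Field F] {p : Pt F} {l : Ln F} (h : p.1 ≤ l.1) :
    (W3 F).Adj (Sum.inl p) (Sum.inr l) := Or.inl ⟨p, l, rfl, rfl, h⟩

lemma adj_lp {F : Type*} [Field F] {p : Pt F} {l : Ln F} (h : p.1 ≤ l.1) :
    (W3 F).Adj (Sum.inr l) (Sum.inl p) := Or.inr ⟨p, l, rfl, rfl, h⟩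

lemma adj_isLeft {F : Type*} [Field F] {x y : Pt F ⊕ Ln F} (h : (W3 F).Adj x y) :
    x.isLeft = !y.isLeft := by
  rcases h with ⟨p, l, rfl, rfl, -⟩ | ⟨p, l, rfl, rfl, -⟩ <;> rfl

lemma walk_parity {F : Type*} [Field F] {x y : Pt F ⊕ Ln F} (w : (W3 F).Walk x y) :
    Even w.length ↔ (x.isLeft = y.isLeft) := by
  induction w with
  | nil => simp
  | @cons a b c h p ih =>
    rw [SimpleGraph.Walk.length_cons, Nat.even_add_one, ih, adj_isLeft h]
    cases hb : b.isLeft <;> cases hc : c.isLeft <;> simp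

lemma reach_dist_parity {F : Type*} [Field F] {x y : Pt F ⊕ Ln F}
    (hr : (W3 F).Reachable x y) (h0 : (W3 F).dist x y ≠ 0) :
    Even ((W3 F).dist x y) ↔ (x.isLeft = y.isLeft) := by
  obtain ⟨w, hw⟩ := SimpleGraph.exists_walk_of_dist_ne_zero h0
  rw [← hw]; exact walk_parity w

lemma no_common_point {F : Type*} [Field F] {l l' : Ln F} (hbot : l.1 ⊓ l'.1 = ⊥) :
    (W3 F).dist (Sum.inr l) (Sum.inr l') ≠ 2 := by
  intro h2
  obtain ⟨w, hw⟩ := SimpleGraph.exists_walk_of_dist_ne_zero (by omega : (W3 F).dist (Sum.inr l) (Sum.inr l') ≠ 0)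
  rw [h2] at hw
  have hadj1 : (W3 F).Adj (Sum.inr l) (w.getVert 1) := by
    have := w.adj_getVert_succ (i := 0) (by omega)
    simpa [SimpleGraph.Walk.getVert_zero] using this
  have hadj2 : (W3 F).Adj (w.getVert 1) (Sum.inr l') := by
    have := w.adj_getVert_succ (i := 1) (by omega)
    have h2' : w.getVert 2 = Sum.inr l' := by
      rw [show (2 : ℕ) = w.length by omega, SimpleGraph.Walk.getVert_length]
    rwa [h2'] at this
  rcases hadj1 with ⟨p, m, h1, -, -⟩ | ⟨p, m, h1, h2', hle⟩
  · exact absurd h1 (by simp)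
  rcases hadj2 with ⟨p', m', h1', h2'', hle'⟩ | ⟨p', m', -, h2'', -⟩
  · have hpp : p' = p := by
      rw [h2'] at h1'; exact (Sum.inl.inj h1').symm
    have hmm : m' = l' := Sum.inr.inj h2''.symm
    have hle2 : p.1 ≤ l.1 ⊓ l'.1 := by
      have h3 : m = l := Sum.inr.inj h1.symm
      refine le_inf (h3 ▸ hle) ?_
      rw [hpp, hmm] at hle'
      exact hle'
    rw [hbot, le_bot_iff] at hle2
    have := p.2
    rw [hle2, finrank_bot] at this
    omega
  · exact absurd h2'' (by simp)

/-- Distance between two trivially-intersecting lines is 4. -/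
lemma dist_code_pair {F : Type*} [Field F] {l l' : Ln F} (hbot : l.1 ⊓ l'.1 = ⊥) :
    (W3 F).dist (Sum.inr l) (Sum.inr l') = 4 := by
  have hfr : Module.finrank F l.1 = 2 := l.2.1
  have hne : l.1 ≠ ⊥ := by
    intro h; rw [h, finrank_bot] at hfr; omega
  obtain ⟨z1, hz1m, hz1⟩ := (Submodule.ne_bot_iff _).mp hne
  obtain ⟨z2, hz2m, hz2, hperp⟩ := exists_perp z1 l'.1 l'.2.1
  have hz12 : z1 ∉ Submodule.span F {z2} := by
    intro h
    have : z1 ∈ l.1 ⊓ l'.1 :=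
      Submodule.mem_inf.mpr ⟨hz1m, (Submodule.span_singleton_le_iff_mem z2 _).mpr hz2m h⟩
    rw [hbot, Submodule.mem_bot] at this
    exact hz1 this
  let m : Ln F := ⟨Submodule.span F {z1, z2}, line_of_perp hz1 hz2 hz12 hperp⟩
  let p1 : Pt F := ⟨Submodule.span F {z1}, finrank_span_singleton hz1⟩
  let p2 : Pt F := ⟨Submodule.span F {z2}, finrank_span_singleton hz2⟩
  have hp1l : p1.1 ≤ l.1 := (Submodule.span_singleton_le_iff_mem z1 _).mpr hz1m
  have hp1m : p1.1 ≤ m.1 :=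
    (Submodule.span_singleton_le_iff_mem z1 _).mpr (Submodule.subset_span (Set.mem_insert _ _))
  have hp2m : p2.1 ≤ m.1 :=
    (Submodule.span_singleton_le_iff_mem z2 _).mpr
      (Submodule.subset_span (Set.mem_insert_of_mem _ rfl))
  have hp2l : p2.1 ≤ l'.1 := (Submodule.span_singleton_le_iff_mem z2 _).mpr hz2m
  let w : (W3 F).Walk (Sum.inr l) (Sum.inr l') :=
    .cons (adj_lp hp1l) (.cons (adj_pl hp1m) (.cons (adj_lp hp2m) (.cons (adj_pl hp2l) .nil)))
  have hle4 : (W3 F).dist (Sum.inr l) (Sum.inr l') ≤ 4 := by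
    simpa [w] using SimpleGraph.dist_le w
  have hreach : (W3 F).Reachable (Sum.inr l) (Sum.inr l') := ⟨w⟩
  have hnell' : l ≠ l' := by
    rintro rfl
    rw [inf_idem] at hbot
    rw [hbot, finrank_bot] at hfr
    omega
  have h0 : (W3 F).dist (Sum.inr l) (Sum.inr l') ≠ 0 := by
    rw [ne_eq, SimpleGraph.dist_eq_zero_iff_eq_or_not_reachable]
    push_neg
    exact ⟨by simpa using hnell', hreach⟩
  have heven : Even ((W3 F).dist (Sum.inr l) (Sum.inr l')) :=
    (reach_dist_parity hreach h0).mpr rfl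
  have h2 := no_common_point hbot
  obtain ⟨k, hk⟩ := heven
  omega

/-- From any point one can reach any line within distance 3. -/
lemma point_line_close {F : Type*} [Field F] (p : Pt F) (l : Ln F) :
    (W3 F).Reachable (Sum.inl p) (Sum.inr l) ∧ (W3 F).dist (Sum.inl p) (Sum.inr l) ≤ 3 := by
  have h1 := p.2
  rw [finrank_eq_one_iff'] at h1
  obtain ⟨v, hv0, hvall⟩ := h1
  have hv : (v : Fin 4 → F) ≠ 0 := by simpa [Submodule.coe_eq_zero] using hv0
  have hspan : p.1 = Submodule.span F {(v : Fin 4 → F)} := by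
    refine le_antisymm ?_ ((Submodule.span_singleton_le_iff_mem _ _).mpr v.2)
    intro x hx
    obtain ⟨c, hc⟩ := hvall ⟨x, hx⟩
    rw [Submodule.mem_span_singleton]
    exact ⟨c, congrArg Subtype.val hc⟩
  obtain ⟨z, hzm, hz0, hperp⟩ := exists_perp (v : Fin 4 → F) l.1 l.2.1
  by_cases hvz : (v : Fin 4 → F) ∈ Submodule.span F {z}
  · have hle : p.1 ≤ l.1 := by
      rw [hspan]
      exact le_trans ((Submodule.span_singleton_le_iff_mem _ _).mpr hvz)
        ((Submodule.span_singleton_le_iff_mem _ _).mpr hzm)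
    let w : (W3 F).Walk (Sum.inl p) (Sum.inr l) := .cons (adj_pl hle) .nil
    exact ⟨⟨w⟩, le_trans (SimpleGraph.dist_le w) (by simp [w])⟩
  · let m : Ln F := ⟨Submodule.span F {(v : Fin 4 → F), z}, line_of_perp hv hz0 hvz hperp⟩
    let pz : Pt F := ⟨Submodule.span F {z}, finrank_span_singleton hz0⟩
    have hpm : p.1 ≤ m.1 := by
      rw [hspan]
      exact (Submodule.span_singleton_le_iff_mem _ _).mpr
        (Submodule.subset_span (Set.mem_insert _ _))
    have hzm' : pz.1 ≤ m.1 :=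
      (Submodule.span_singleton_le_iff_mem _ _).mpr
        (Submodule.subset_span (Set.mem_insert_of_mem _ rfl))
    have hzl : pz.1 ≤ l.1 := (Submodule.span_singleton_le_iff_mem _ _).mpr hzm
    let w : (W3 F).Walk (Sum.inl p) (Sum.inr l) :=
      .cons (adj_pl hpm) (.cons (adj_lp hzm') (.cons (adj_pl hzl) .nil))
    exact ⟨⟨w⟩, le_trans (SimpleGraph.dist_le w) (by simp [w])⟩

end Aux

section Concrete

open Submodule Module SimpleGraph

/-! ### The five code lines -/

def gu : Fin 5 → V4 := ![![1,0,1,0], ![1,0,0,1], ![1,0,2,1], ![1,0,1,2], ![1,0,2,2]]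
def gv : Fin 5 → V4 := ![![1,1,2,2], ![1,1,1,2], ![1,1,0,1], ![1,1,1,1], ![1,1,2,0]]

def LL (i : Fin 5) : Submodule F3 V4 := Submodule.span F3 {gu i, gv i}

lemma mem_exLines_iff {W : Submodule F3 V4} : W ∈ exLines ↔ ∃ i : Fin 5, W = LL i := by
  constructor
  · intro h
    rcases h with rfl | rfl | rfl | rfl | rfl
    exacts [⟨0, rfl⟩, ⟨1, rfl⟩, ⟨2, rfl⟩, ⟨3, rfl⟩, ⟨4, rfl⟩]
  · rintro ⟨i, rfl⟩
    fin_cases i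
    · exact Set.mem_insert _ _
    · exact Set.mem_insert_of_mem _ (Set.mem_insert _ _)
    · exact Set.mem_insert_of_mem _ (Set.mem_insert_of_mem _ (Set.mem_insert _ _))
    · exact Set.mem_insert_of_mem _ (Set.mem_insert_of_mem _ (Set.mem_insert_of_mem _ (Set.mem_insert _ _)))
    · exact Set.mem_insert_of_mem _ (Set.mem_insert_of_mem _ (Set.mem_insert_of_mem _ (Set.mem_insert_of_mem _ rfl)))

lemma LL_iso : ∀ i : Fin 5, IsIsoLine F3 (LL i) := by
  have h1 : ∀ i : Fin 5, gu i ≠ 0 := by decide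
  have h2 : ∀ i : Fin 5, gv i ≠ 0 := by decide
  have h3 : ∀ i : Fin 5, ∀ a : F3, a • gv i ≠ gu i := by decide
  have h4 : ∀ i : Fin 5, sform (gu i) (gv i) = 0 := by decide
  intro i
  refine line_of_perp (h1 i) (h2 i) ?_ (h4 i)
  rw [Submodule.mem_span_singleton]
  push_neg
  exact h3 i

set_option maxRecDepth 4000 in
lemma LL_disj : ∀ i j : Fin 5, i ≠ j → LL i ⊓ LL j = ⊥ := by
  have key : ∀ i j : Fin 5, i ≠ j → ∀ a b c d : F3,
      a • gu i + b • gv i = c • gu j + d • gv j → a • gu i + b • gv i = 0 := by decide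
  intro i j hij
  rw [eq_bot_iff]
  intro x hx
  obtain ⟨h1, h2⟩ := Submodule.mem_inf.mp hx
  obtain ⟨a, b, hab⟩ := Submodule.mem_span_pair.mp h1
  obtain ⟨c, d, hcd⟩ := Submodule.mem_span_pair.mp h2
  rw [Submodule.mem_bot, ← hab]
  exact key i j hij a b c d (by rw [hab, hcd])

lemma LL_ne : ∀ i j : Fin 5, i ≠ j → LL i ≠ LL j := by
  intro i j hij h
  have := LL_disj i j hij
  rw [h, inf_idem] at this
  have h2 := (LL_iso j).1
  rw [this, finrank_bot] at h2
  omega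

/-! ### The covering computation -/

def covT (z0 z1 z2 z3 : F3) : Bool :=
  [((1,0,1,0),(1,1,2,2)), ((1,0,0,1),(1,1,1,2)), ((1,0,2,1),(1,1,0,1)),
   ((1,0,1,2),(1,1,1,1)), ((1,0,2,2),(1,1,2,0))].any
    fun (((u0 : F3), (u1 : F3), (u2 : F3), (u3 : F3)),
         ((v0 : F3), (v1 : F3), (v2 : F3), (v3 : F3))) =>
    (List.finRange 3).any fun c => (List.finRange 3).any fun d =>
      let c : F3 := c; let d : F3 := d
      c*u0+d*v0 = z0 ∧ c*u1+d*v1 = z1 ∧ c*u2+d*v2 = z2 ∧ c*u3+d*v3 = z3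

def sformT (x0 x1 x2 x3 y0 y1 y2 y3 : F3) : F3 := x0*y1 - x1*y0 + x2*y3 - x3*y2

set_option maxRecDepth 10000 in
theorem QT : ∀ x0 x1 x2 x3 y0 y1 y2 y3 : F3, sformT x0 x1 x2 x3 y0 y1 y2 y3 = 0 →
    covT x0 x1 x2 x3 ∨ covT y0 y1 y2 y3 ∨ covT (x0+y0) (x1+y1) (x2+y2) (x3+y3) ∨
    covT (x0+2*y0) (x1+2*y1) (x2+2*y2) (x3+2*y3) := by decide

def covered (z : V4) : Prop := ∃ i : Fin 5, ∃ c d : F3, c • gu i + d • gv i = z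

set_option maxRecDepth 4000 in
instance : DecidablePred covered := fun z => by unfold covered; infer_instance

lemma covered_mem {z : V4} (h : covered z) : ∃ i : Fin 5, z ∈ LL i := by
  obtain ⟨i, c, d, h⟩ := h
  exact ⟨i, Submodule.mem_span_pair.mpr ⟨c, d, h⟩⟩

lemma mem_covered {z : V4} {i : Fin 5} (h : z ∈ LL i) : covered z := by
  obtain ⟨c, d, h⟩ := Submodule.mem_span_pair.mp h
  exact ⟨i, c, d, h⟩

set_option maxRecDepth 4000 in
lemma cov_iff : ∀ z : V4, covered z ↔ covT (z 0) (z 1) (z 2) (z 3) = true := by decide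

lemma Qvec : ∀ x y : V4, sform x y = 0 →
    covered x ∨ covered y ∨ covered (x + y) ∨ covered (x + (2 : F3) • y) := by
  intro x y h
  rw [cov_iff x, cov_iff y, cov_iff (x + y), cov_iff (x + (2 : F3) • y)]
  exact QT (x 0) (x 1) (x 2) (x 3) (y 0) (y 1) (y 2) (y 3) h

end Concrete

section Final

open Submodule Module SimpleGraph

def LnL (i : Fin 5) : Ln F3 := ⟨LL i, LL_iso i⟩

lemma line_to_code (l : Ln F3) :
    ∃ i : Fin 5, (W3 F3).dist (Sum.inr l) (Sum.inr (LnL i)) ≤ 2 := by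
  have hfin : FiniteDimensional F3 l.1 := by
    refine FiniteDimensional.of_finrank_pos ?_
    rw [l.2.1]; norm_num
  let b := Module.finBasisOfFinrankEq F3 l.1 l.2.1
  set b0 : V4 := ((b 0 : l.1) : V4) with hb0def
  set b1 : V4 := ((b 1 : l.1) : V4) with hb1def
  have li : LinearIndependent F3 (fun i : Fin 2 => ((b i : l.1) : V4)) :=
    b.linearIndependent.map' l.1.subtype (Submodule.ker_subtype l.1)
  have key : ∀ a c : F3, a • b0 + c • b1 = 0 → a = 0 ∧ c = 0 := by
    intro a c h
    have := Fintype.linearIndependent_iff.mp li ![a, c] (by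
      rw [Fin.sum_univ_two]
      simpa using h)
    exact ⟨this 0, this 1⟩
  have hb0m : b0 ∈ l.1 := (b 0).2
  have hb1m : b1 ∈ l.1 := (b 1).2
  have hsf : sform b0 b1 = 0 := l.2.2 _ hb0m _ hb1m
  have hz : ∃ z, z ∈ l.1 ∧ z ≠ 0 ∧ covered z := by
    rcases Qvec b0 b1 hsf with hc | hc | hc | hc
    · refine ⟨b0, hb0m, ?_, hc⟩
      intro h
      exact one_ne_zero ((key 1 0 (by simp [h])).1)
    · refine ⟨b1, hb1m, ?_, hc⟩
      intro h
      exact one_ne_zero ((key 0 1 (by simp [h])).2)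
    · refine ⟨b0 + b1, l.1.add_mem hb0m hb1m, ?_, hc⟩
      intro h
      exact one_ne_zero ((key 1 1 (by simpa using h)).1)
    · refine ⟨b0 + (2 : F3) • b1, l.1.add_mem hb0m (l.1.smul_mem _ hb1m), ?_, hc⟩
      intro h
      exact one_ne_zero ((key 1 2 (by simpa using h)).1)
  obtain ⟨z, hzl, hz0, hcov⟩ := hz
  obtain ⟨i, hzi⟩ := covered_mem hcov
  refine ⟨i, ?_⟩
  let pz : Pt F3 := ⟨Submodule.span F3 {z}, finrank_span_singleton hz0⟩
  have h1 : pz.1 ≤ l.1 := (Submodule.span_singleton_le_iff_mem _ _).mpr hzl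
  have h2 : pz.1 ≤ (LnL i).1 := (Submodule.span_singleton_le_iff_mem _ _).mpr hzi
  let w : (W3 F3).Walk (Sum.inr l) (Sum.inr (LnL i)) :=
    .cons (adj_lp h1) (.cons (adj_pl h2) .nil)
  exact le_trans (SimpleGraph.dist_le w) (by simp [w])

end Final

/-- The five explicit row spaces are pairwise trivially intersecting
totally isotropic `2`-dimensional subspaces of `𝔽₃⁴`, and the corresponding code of
five lines of `W₃(3)` has minimum distance `4` and covering radius `3`: it is a maximal
partial spread of `W₃(3)` of size `5`. -/
theorem stmt18 :
    (∀ W ∈ exLines, IsIsoLine (ZMod 3) W) ∧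
    (∀ W ∈ exLines, ∀ W' ∈ exLines, W ≠ W' → W ⊓ W' = ⊥) ∧
    ({x | ∃ ℓ : Ln (ZMod 3), x = Sum.inr ℓ ∧ ℓ.1 ∈ exLines} :
        Set (Pt (ZMod 3) ⊕ Ln (ZMod 3))).ncard = 5 ∧
    minDist (W3 (ZMod 3)) {x | ∃ ℓ : Ln (ZMod 3), x = Sum.inr ℓ ∧ ℓ.1 ∈ exLines} = 4 ∧
    covRad (W3 (ZMod 3)) {x | ∃ ℓ : Ln (ZMod 3), x = Sum.inr ℓ ∧ ℓ.1 ∈ exLines} = 3 := by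
  set C : Set (Pt (ZMod 3) ⊕ Ln (ZMod 3)) :=
    {x | ∃ ℓ : Ln (ZMod 3), x = Sum.inr ℓ ∧ ℓ.1 ∈ exLines} with hCdef
  have memC : ∀ i : Fin 5, Sum.inr (LnL i) ∈ C :=
    fun i => ⟨LnL i, rfl, mem_exLines_iff.mpr ⟨i, rfl⟩⟩
  have C_char : ∀ x ∈ C, ∃ i : Fin 5, x = Sum.inr (LnL i) := by
    rintro x ⟨ℓ, rfl, hℓ⟩
    obtain ⟨i, hi⟩ := mem_exLines_iff.mp hℓ
    exact ⟨i, by rw [show ℓ = LnL i from Subtype.ext hi]⟩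
  have hne : ∀ i j : Fin 5, i ≠ j →
      (Sum.inr (LnL i) : Pt (ZMod 3) ⊕ Ln (ZMod 3)) ≠ Sum.inr (LnL j) := by
    intro i j hij h
    exact LL_ne i j hij (congrArg Subtype.val (Sum.inr.inj h))
  refine ⟨?_, ?_, ?_, ?_, ?_⟩
  · -- each is an isotropic line
    intro W hW
    obtain ⟨i, rfl⟩ := mem_exLines_iff.mp hW
    exact LL_iso i
  · -- pairwise trivial intersection
    intro W hW W' hW' hne'
    obtain ⟨i, rfl⟩ := mem_exLines_iff.mp hW
    obtain ⟨j, rfl⟩ := mem_exLines_iff.mp hW'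
    exact LL_disj i j (fun h => hne' (by rw [h]))
  · -- cardinality 5
    have hC_eq : C = {Sum.inr (LnL 0), Sum.inr (LnL 1), Sum.inr (LnL 2),
        Sum.inr (LnL 3), Sum.inr (LnL 4)} := by
      ext x
      constructor
      · intro hx
        obtain ⟨i, rfl⟩ := C_char x hx
        fin_cases i <;> simp
      · intro hx
        rcases hx with rfl | rfl | rfl | rfl | rfl
        exacts [memC 0, memC 1, memC 2, memC 3, memC 4]
    rw [hC_eq]
    rw [Set.ncard_insert_of_notMem (by
        simp only [Set.mem_insert_iff, Set.mem_singleton_iff]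
        push_neg
        exact ⟨hne 0 1 (by decide), hne 0 2 (by decide), hne 0 3 (by decide),
          hne 0 4 (by decide)⟩)
      ((((Set.finite_singleton _).insert _).insert _).insert _)]
    rw [Set.ncard_insert_of_notMem (by
        simp only [Set.mem_insert_iff, Set.mem_singleton_iff]
        push_neg
        exact ⟨hne 1 2 (by decide), hne 1 3 (by decide), hne 1 4 (by decide)⟩)
      (((Set.finite_singleton _).insert _).insert _)]
    rw [Set.ncard_insert_of_notMem (by
        simp only [Set.mem_insert_iff, Set.mem_singleton_iff]
        push_neg
        exact ⟨hne 2 3 (by decide), hne 2 4 (by decide)⟩)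
      ((Set.finite_singleton _).insert _)]
    rw [Set.ncard_insert_of_notMem (by
        simp only [Set.mem_singleton_iff]
        exact hne 3 4 (by decide))
      (Set.finite_singleton _)]
    rw [Set.ncard_singleton]
  · -- minimum distance 4
    have mem4 : (4 : ℕ) ∈ {d | ∃ x ∈ C, ∃ y ∈ C, x ≠ y ∧ (W3 (ZMod 3)).dist x y = d} :=
      ⟨Sum.inr (LnL 0), memC 0, Sum.inr (LnL 1), memC 1, hne 0 1 (by decide),
        dist_code_pair (LL_disj 0 1 (by decide))⟩
    have bound : ∀ d ∈ {d | ∃ x ∈ C, ∃ y ∈ C, x ≠ y ∧ (W3 (ZMod 3)).dist x y = d},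
        4 ≤ d := by
      rintro d ⟨x, hx, y, hy, hxy, rfl⟩
      obtain ⟨i, rfl⟩ := C_char x hx
      obtain ⟨j, rfl⟩ := C_char y hy
      have hij : i ≠ j := fun h => hxy (by rw [h])
      exact le_of_eq (dist_code_pair (LL_disj i j hij)).symm
    exact le_antisymm (Nat.sInf_le mem4) (le_csInf ⟨4, mem4⟩ bound)
  · -- covering radius 3
    have bound : ∀ γ : Pt (ZMod 3) ⊕ Ln (ZMod 3), distToCode (W3 (ZMod 3)) C γ ≤ 3 := by
      intro γ
      rcases γ with p | l
      · refine le_trans (Nat.sInf_le ⟨Sum.inr (LnL 0), memC 0, rfl⟩) ?_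
        exact (point_line_close p (LnL 0)).2
      · obtain ⟨i, hd⟩ := line_to_code l
        refine le_trans (Nat.sInf_le ⟨Sum.inr (LnL i), memC i, rfl⟩) ?_
        exact le_trans hd (by norm_num)
    have hv : (![0,1,0,0] : V4) ≠ 0 := by decide
    have hcov : ¬ covered ![0,1,0,0] := by decide
    set p0 : Pt F3 := ⟨Submodule.span F3 {![0,1,0,0]}, finrank_span_singleton hv⟩ with hp0
    have dist3 : ∀ i : Fin 5,
        (W3 (ZMod 3)).dist (Sum.inl p0) (Sum.inr (LnL i)) = 3 := by
      intro i
      obtain ⟨hreach, hle⟩ := point_line_close p0 (LnL i)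
      have h0 : (W3 (ZMod 3)).dist (Sum.inl p0) (Sum.inr (LnL i)) ≠ 0 := by
        rw [ne_eq, SimpleGraph.dist_eq_zero_iff_eq_or_not_reachable]
        push_neg
        exact ⟨by simp, hreach⟩
      have hodd : ¬ Even ((W3 (ZMod 3)).dist (Sum.inl p0) (Sum.inr (LnL i))) := by
        intro he
        have := (reach_dist_parity hreach h0).mp he
        simp at this
      have h1 : (W3 (ZMod 3)).dist (Sum.inl p0) (Sum.inr (LnL i)) ≠ 1 := by
        intro h
        have hadj := SimpleGraph.dist_eq_one_iff_adj.mp h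
        rcases hadj with ⟨p, m, hp, hm, hle'⟩ | ⟨p, m, hp, hm, hle'⟩
        · have hp' : p = p0 := (Sum.inl.inj hp).symm
          have hm' : m = LnL i := (Sum.inr.inj hm).symm
          rw [hp', hm'] at hle'
          exact hcov (mem_covered (hle' (Submodule.mem_span_singleton_self _)))
        · exact absurd hp (by simp)
      rw [Nat.not_even_iff_odd] at hodd
      obtain ⟨k, hk⟩ := hodd
      have hle' : (W3 (ZMod 3)).dist (Sum.inl p0) (Sum.inr (LnL i)) ≤ 3 := hle
      omega
    have hd3 : distToCode (W3 (ZMod 3)) C (Sum.inl p0) = 3 := by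
      have hmem : (3 : ℕ) ∈ {d | ∃ x ∈ C, (W3 (ZMod 3)).dist (Sum.inl p0) x = d} :=
        ⟨Sum.inr (LnL 0), memC 0, dist3 0⟩
      have hall : ∀ d ∈ {d | ∃ x ∈ C, (W3 (ZMod 3)).dist (Sum.inl p0) x = d}, d = 3 := by
        rintro d ⟨x, hx, rfl⟩
        obtain ⟨i, rfl⟩ := C_char x hx
        exact dist3 i
      exact le_antisymm (Nat.sInf_le hmem)
        (le_csInf ⟨3, hmem⟩ fun d hd => le_of_eq (hall d hd).symm)
    have hbdd : BddAbove {d | ∃ γ, distToCode (W3 (ZMod 3)) C γ = d} := by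
      refine ⟨3, ?_⟩
      rintro d ⟨γ, rfl⟩
      exact bound γ
    refine le_antisymm ?_ (le_csSup hbdd ⟨Sum.inl p0, hd3⟩)
    refine csSup_le ⟨3, Sum.inl p0, hd3⟩ ?_
    rintro d ⟨γ, rfl⟩
    exact bound γ
end
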